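/- arXiv:2003.07503 — 3 statements merged into one kernel-verified Lean document; each statement's English description precedes it below -/
import Mathlib

section
/- Let f : 2^N → ℝ be a subadditive set function on a finite ground set N (i.e., f(A ∪ B) ≤ f(A) + f(B) for all A, B ⊆ N). If X is a random subset of N in which each element is included independently with probability 1/2, then E[f(X)] ≥ (1/2)·f(N). -/
/-! Pair each subset `A` with its complement: subadditivity gives `f N ≤ f A + f Aᶜ`, and summing
over all `2^|N|` subsets counts every `f A` exactly twice, so `2^|N| f N ≤ 2 ∑_A f A`. -/

open Finset

section

variable {α M : Type*} [Fintype α] [DecidableEq α]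

lemma Finset.sum_comp_compl [AddCommMonoid M] (f : Finset α → M) :
    ∑ A, f Aᶜ = ∑ A, f A :=
  Equiv.sum_comp (compl_involutive.toPerm _) f

lemma two_pow_card_mul_le_two_mul_sum (f : Finset α → ℝ)
    (hf : ∀ A : Finset α, f univ ≤ f A + f Aᶜ) :
    2 ^ Fintype.card α * f univ ≤ 2 * ∑ A, f A :=
  calc 2 ^ Fintype.card α * f univ = ∑ _A : Finset α, f univ := by simp
    _ ≤ ∑ A, (f A + f Aᶜ) := sum_le_sum fun A _ ↦ hf A
    _ = 2 * ∑ A, f A := by rw [sum_add_distrib, sum_comp_compl]; ring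

end

/-- Subadditive sampling lemma: for a subadditive set function `f` on a finite
ground set, the expectation of `f` over a uniformly random subset (each element
included independently with probability 1/2, so each subset has probability
`2^{-|N|}`) is at least half of `f(N)`. -/
theorem subadditive_sampling {N : Type*} [Fintype N] [DecidableEq N]
    (f : Finset N → ℝ)
    (hsub : ∀ A B : Finset N, f (A ∪ B) ≤ f A + f B) :
    (1 / 2) * f Finset.univ ≤
      ∑ A ∈ (Finset.univ : Finset N).powerset,
        ((1 : ℝ) / 2 ^ (Fintype.card N)) * f A := by
  have key := two_pow_card_mul_le_two_mul_sum f fun A ↦ by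
    simpa only [union_compl] using hsub A Aᶜ
  rw [powerset_univ, ← mul_sum, one_div, one_div, inv_mul_eq_div, inv_mul_eq_div,
    div_le_div_iff₀ two_pos (by positivity)]
  linarith
end

section
/- Fix a buyer value v_b ≥ 0 and a tentative price p_b with v_b ≥ p_b. Let v_s, v_s' be i.i.d. nonnegative random variables with CDF F. Then the expected contribution E[v_b·1{trade} + v_s·1{no trade}] ≥ (2 − √3)·v_b, where 'trade' is the event {v_s' ≤ v_b and v_s ≤ max(p_b, v_s')}. -/
/-!
Let `a = P(v_s ≤ v_b)`. If `v_s > v_b` there is no loss: the contribution is `v_s` or `v_b`,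
both at least `v_b`, which gives the bound `(1 - a) v_b`. On the other hand trade happens whenever
`v_s ≤ v_s' ≤ v_b`, and by exchangeability of the i.i.d. pair this event has probability at least
`a² / 2`. Since `max (a² / 2) (1 - a) ≥ 2 - √3` for every `a`, one of the two bounds suffices.
-/

open MeasureTheory ProbabilityTheory

section
variable {Ω : Type*} [MeasurableSpace Ω] {μ : Measure Ω}

lemma MeasurableSet.integrable_ite_const [IsFiniteMeasure μ] {E : Type*} [NormedAddCommGroup E]
    {p : Ω → Prop} [DecidablePred p] {f : Ω → E} (hp : MeasurableSet {ω | p ω}) (c : E)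
    (hf : Integrable f μ) :
    Integrable (fun ω => if p ω then c else f ω) μ :=
  Integrable.piecewise (s := {ω | p ω}) hp (integrable_const c).integrableOn hf.integrableOn

lemma mul_measureReal_le_integral_of_nonneg [IsFiniteMeasure μ] {f : Ω → ℝ} {s : Set Ω} {c : ℝ}
    (hf : Integrable f μ) (hf0 : 0 ≤ f) (hs : MeasurableSet s) (hc : ∀ x ∈ s, c ≤ f x) :
    c * μ.real s ≤ ∫ x, f x ∂μ :=
  (setIntegral_ge_of_const_le_real hs (measure_ne_top μ s) hc hf.integrableOn).trans
    (setIntegral_le_integral hf (ae_of_all _ hf0))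

lemma ProbabilityTheory.IndepFun.map_prodMk_swap_eq [IsFiniteMeasure μ] {β : Type*}
    [MeasurableSpace β] {X Y : Ω → β} (hX : Measurable X) (hY : Measurable Y)
    (hXY : IndepFun X Y μ) (hid : μ.map X = μ.map Y) :
    μ.map (fun ω => (Y ω, X ω)) = μ.map (fun ω => (X ω, Y ω)) := by
  rw [hXY.symm.map_prod_eq_prod_map_map hY.aemeasurable hX.aemeasurable,
    hXY.map_prod_eq_prod_map_map hX.aemeasurable hY.aemeasurable, hid]

lemma ProbabilityTheory.IndepFun.sq_measureReal_le_le_two_mul [IsProbabilityMeasure μ]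
    {X Y : Ω → ℝ} (hX : Measurable X) (hY : Measurable Y) (hXY : IndepFun X Y μ)
    (hid : μ.map X = μ.map Y) (c : ℝ) :
    μ.real {ω | X ω ≤ c} ^ 2 ≤ 2 * μ.real {ω | X ω ≤ Y ω ∧ Y ω ≤ c} := by
  set S : Set (ℝ × ℝ) := {p | p.1 ≤ p.2 ∧ p.2 ≤ c}
  have hS : MeasurableSet S :=
    (measurableSet_le measurable_fst measurable_snd).inter
      (measurableSet_le measurable_snd measurable_const)
  have h_mirror : μ.real {ω | Y ω ≤ X ω ∧ X ω ≤ c} = μ.real {ω | X ω ≤ Y ω ∧ Y ω ≤ c} := by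
    have := congrArg (fun ν : Measure (ℝ × ℝ) => ν.real S) (hXY.map_prodMk_swap_eq hX hY hid)
    rwa [map_measureReal_apply (hY.prodMk hX) hS, map_measureReal_apply (hX.prodMk hY) hS] at this
  have h_both : μ.real ({ω | X ω ≤ c} ∩ {ω | Y ω ≤ c}) = μ.real {ω | X ω ≤ c} ^ 2 := by
    have hY_eq : μ.real {ω | Y ω ≤ c} = μ.real {ω | X ω ≤ c} := by
      have := congrArg (fun ν : Measure ℝ => ν.real (Set.Iic c)) hid.symm
      rwa [map_measureReal_apply hX measurableSet_Iic,
        map_measureReal_apply hY measurableSet_Iic] at this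
    have h_indep : μ ({ω | X ω ≤ c} ∩ {ω | Y ω ≤ c}) = μ {ω | X ω ≤ c} * μ {ω | Y ω ≤ c} :=
      hXY.measure_inter_preimage_eq_mul _ _ measurableSet_Iic measurableSet_Iic
    rw [measureReal_def, h_indep, ENNReal.toReal_mul, ← measureReal_def, ← measureReal_def, hY_eq,
      sq]
  have h_cover : {ω | X ω ≤ c} ∩ {ω | Y ω ≤ c} ⊆
      {ω | X ω ≤ Y ω ∧ Y ω ≤ c} ∪ {ω | Y ω ≤ X ω ∧ X ω ≤ c} := by
    rintro ω ⟨hXc, hYc⟩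
    rcases le_total (X ω) (Y ω) with h | h
    · exact Or.inl ⟨h, hYc⟩
    · exact Or.inr ⟨h, hXc⟩
  calc μ.real {ω | X ω ≤ c} ^ 2 = μ.real ({ω | X ω ≤ c} ∩ {ω | Y ω ≤ c}) := h_both.symm
    _ ≤ μ.real {ω | X ω ≤ Y ω ∧ Y ω ≤ c} + μ.real {ω | Y ω ≤ X ω ∧ X ω ≤ c} :=
      (measureReal_mono h_cover).trans (measureReal_union_le _ _)
    _ = 2 * μ.real {ω | X ω ≤ Y ω ∧ Y ω ≤ c} := by rw [h_mirror, two_mul]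

end

/-- The threshold is `a = √3 - 1`, where `a² / 2 = 1 - a`. -/
lemma two_sub_sqrt_three_le_half_sq_or_one_sub (a : ℝ) :
    2 - √3 ≤ a ^ 2 / 2 ∨ 2 - √3 ≤ 1 - a := by
  have h3 : √3 ^ 2 = 3 := Real.sq_sqrt (by norm_num)
  rcases le_or_gt (√3 - 1) a with ha | ha
  · left
    have h1 : 1 ≤ √3 := by nlinarith [Real.sqrt_nonneg 3]
    nlinarith [mul_le_mul ha ha (by linarith) (by linarith)]
  · right; linarith

theorem trade_contribution_general {Ω : Type*} [MeasurableSpace Ω]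
    (μ : Measure Ω) [IsProbabilityMeasure μ]
    (vs vs' : Ω → ℝ) (hm : Measurable vs) (hm' : Measurable vs')
    (hindep : ProbabilityTheory.IndepFun vs vs' μ)
    (hid : Measure.map vs μ = Measure.map vs' μ)
    (hnonneg : ∀ ω, 0 ≤ vs ω)
    (hint : Integrable vs μ)
    (vb pb : ℝ) (hpb : 0 ≤ pb) (hpbvb : pb ≤ vb) :
    (2 - Real.sqrt 3) * vb ≤
      ∫ ω, (if vs' ω ≤ vb ∧ vs ω ≤ max pb (vs' ω) then vb else vs ω) ∂μ := by
  have hvb : 0 ≤ vb := hpb.trans hpbvb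
  set g : Ω → ℝ := fun ω => if vs' ω ≤ vb ∧ vs ω ≤ max pb (vs' ω) then vb else vs ω
  have hg0 : 0 ≤ g := fun ω => by
    change 0 ≤ g ω
    dsimp only [g]
    split_ifs
    exacts [hvb, hnonneg ω]
  have h_trade_meas : MeasurableSet {ω | vs' ω ≤ vb ∧ vs ω ≤ max pb (vs' ω)} :=
    (measurableSet_le hm' measurable_const).inter (measurableSet_le hm (measurable_const.max hm'))
  have hg_int : Integrable g μ := h_trade_meas.integrable_ite_const vb hint
  have h_trade : vb * μ.real {ω | vs ω ≤ vs' ω ∧ vs' ω ≤ vb} ≤ ∫ ω, g ω ∂μ :=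
    mul_measureReal_le_integral_of_nonneg hg_int hg0
      ((measurableSet_le hm hm').inter (measurableSet_le hm' measurable_const))
      fun ω hω => by dsimp only [g]; rw [if_pos ⟨hω.2, hω.1.trans (le_max_right pb _)⟩]
  have h_high : vb * μ.real {ω | vs ω ≤ vb}ᶜ ≤ ∫ ω, g ω ∂μ :=
    mul_measureReal_le_integral_of_nonneg hg_int hg0 (measurableSet_le hm measurable_const).compl
      fun ω hω => by
        have hlt : vb < vs ω := by simpa using hω
        dsimp only [g]
        split_ifs
        exacts [le_rfl, hlt.le]
  rw [probReal_compl_eq_one_sub (measurableSet_le hm measurable_const)] at h_high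
  have h_iid := hindep.sq_measureReal_le_le_two_mul hm hm' hid vb
  rcases two_sub_sqrt_three_le_half_sq_or_one_sub (μ.real {ω | vs ω ≤ vb}) with h | h <;>
    nlinarith

/-- Expected contribution of a buyer-seller pair in Reserve Rehearsal: with
`0 ≤ p_b ≤ v_b` and i.i.d. nonnegative integrable seller values `v_s, v_s'`,
the expectation of (`v_b` if trade, else `v_s`) is at least `(2 − √3)·v_b`,
where trade is the event `{v_s' ≤ v_b and v_s ≤ max(p_b, v_s')}`. -/
theorem trade_contribution {Ω : Type*} [MeasurableSpace Ω]
    (μ : Measure Ω) [IsProbabilityMeasure μ]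
    (vs vs' : Ω → ℝ) (hm : Measurable vs) (hm' : Measurable vs')
    (hindep : ProbabilityTheory.IndepFun vs vs' μ)
    (hid : Measure.map vs μ = Measure.map vs' μ)
    (hnonneg : ∀ ω, 0 ≤ vs ω) (hnonneg' : ∀ ω, 0 ≤ vs' ω)
    (hint : Integrable vs μ) (hint' : Integrable vs' μ)
    (vb pb : ℝ) (hpb : 0 ≤ pb) (hpbvb : pb ≤ vb) :
    (2 - Real.sqrt 3) * vb ≤
      ∫ ω, (if vs' ω ≤ vb ∧ vs ω ≤ max pb (vs' ω) then vb else vs ω) ∂μ :=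
  trade_contribution_general μ vs vs' hm hm' hindep hid hnonneg hint vb pb hpb hpbvb
end

section
/- OPT versus adjusted OPT (deterministic version): let B be a finite set of buyers each assigned a disjoint set S_b of sellers, with values v_b(S_b) ≥ 0, seller values v_s ≥ 0 and samples v'_s ≥ 0. Define T_b = v_b(S_b) − Σ_{s∈S_b} v_s and T̂_b = v_b(S_b) − Σ_{s∈S_b} max(v_s, v'_s). Then there exists a sub-allocation (keeping only buyers with T̂_b > 0) whose adjusted surplus satisfies Σ_b T̂_b(restricted) ≥ Σ_b T_b − Σ_{s} (v'_s − v_s)₊, where the last sum is over all sellers. -/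
open scoped Classical

/-! Since `max (v s) (v' s) - v s = (v' s - v s)₊`, the surplus of every buyer drops by exactly
`Σ_{s ∈ S_b} (v' s - v s)₊` when seller values are replaced by `max v v'`; as the `S_b` are
disjoint, the total drop is at most `Σ_s (v' s - v s)₊`. Dropping the buyers whose adjusted
surplus is nonpositive can only increase the total. -/

open Finset

lemma max_sub_left_eq_max_sub_zero {α : Type*} [AddCommGroup α] [LinearOrder α]
    [IsOrderedAddMonoid α]
    (a b : α) : max a b - a = max (b - a) 0 := by
  rw [← max_sub_sub_right, sub_self, max_comm]

lemma sum_sum_le_univ_sum_of_pairwise_disjoint {ι α M : Type*} [Fintype ι] [Fintype α]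
    [AddCommMonoid M] [PartialOrder M] [IsOrderedAddMonoid M]
    {t : ι → Finset α} (ht : ∀ i j, i ≠ j → Disjoint (t i) (t j)) {f : α → M}
    (hf : ∀ a, 0 ≤ f a) :
    ∑ i, ∑ a ∈ t i, f a ≤ ∑ a, f a := by
  rw [← sum_biUnion fun i _ j _ hij => ht i j hij]
  exact sum_le_univ_sum_of_nonneg hf

lemma sum_le_sum_filter_of_nonpos {ι M : Type*} [AddCommMonoid M] [PartialOrder M]
    [IsOrderedAddMonoid M] {s : Finset ι} {p : ι → Prop} [DecidablePred p] {f : ι → M}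
    (hf : ∀ i ∈ s, ¬p i → f i ≤ 0) :
    ∑ i ∈ s, f i ≤ ∑ i ∈ s with p i, f i := by
  rw [sum_filter]
  refine sum_le_sum fun i hi => ?_
  split_ifs with hpi
  exacts [le_rfl, hf i hi hpi]

theorem opt_vs_adjusted_opt_general {B S : Type*} [Fintype B] [Fintype S]
    (Sb : B → Finset S) (hdisj : ∀ b b' : B, b ≠ b' → Disjoint (Sb b) (Sb b'))
    (vb : B → ℝ) (vs vs' : S → ℝ) :
    (∑ b : B, (vb b - ∑ s ∈ Sb b, vs s)) - ∑ s : S, max (vs' s - vs s) 0 ≤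
      ∑ b ∈ Finset.univ.filter
          (fun b => ∑ s ∈ Sb b, max (vs s) (vs' s) < vb b),
        (vb b - ∑ s ∈ Sb b, max (vs s) (vs' s)) := by
  have surplus_split : ∑ b : B, (vb b - ∑ s ∈ Sb b, vs s) =
      ∑ b : B, (vb b - ∑ s ∈ Sb b, max (vs s) (vs' s)) +
        ∑ b : B, ∑ s ∈ Sb b, max (vs' s - vs s) 0 := by
    simp only [← max_sub_left_eq_max_sub_zero, sum_sub_distrib]
    ring
  have total_loss : ∑ b : B, ∑ s ∈ Sb b, max (vs' s - vs s) 0 ≤ ∑ s : S, max (vs' s - vs s) 0 :=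
    sum_sum_le_univ_sum_of_pairwise_disjoint hdisj fun s => le_max_right _ 0
  have drop_nonpositive : ∑ b : B, (vb b - ∑ s ∈ Sb b, max (vs s) (vs' s)) ≤
      ∑ b ∈ Finset.univ.filter (fun b => ∑ s ∈ Sb b, max (vs s) (vs' s) < vb b),
        (vb b - ∑ s ∈ Sb b, max (vs s) (vs' s)) :=
    sum_le_sum_filter_of_nonpos fun b _ hb => sub_nonpos.mpr (not_lt.mp hb)
  linarith

/-- OPT versus adjusted OPT (deterministic version): restricting an allocation
to the buyers with positive adjusted surplus loses at most
`Σ_s (v'_s − v_s)₊` compared with the original surplus. -/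
theorem opt_vs_adjusted_opt {B S : Type*} [Fintype B] [Fintype S] [DecidableEq S]
    (Sb : B → Finset S) (hdisj : ∀ b b' : B, b ≠ b' → Disjoint (Sb b) (Sb b'))
    (vb : B → ℝ) (vs vs' : S → ℝ)
    (hvb : ∀ b, 0 ≤ vb b) (hvs : ∀ s, 0 ≤ vs s) (hvs' : ∀ s, 0 ≤ vs' s) :
    (∑ b : B, (vb b - ∑ s ∈ Sb b, vs s)) - ∑ s : S, max (vs' s - vs s) 0 ≤
      ∑ b ∈ Finset.univ.filter
          (fun b => ∑ s ∈ Sb b, max (vs s) (vs' s) < vb b),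
        (vb b - ∑ s ∈ Sb b, max (vs s) (vs' s)) :=
  opt_vs_adjusted_opt_general Sb hdisj vb vs vs'
end
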